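/- Let A, E ∈ ℝ^{n×n}, B ∈ ℝ^{n×1}, and let S ∈ ℂ^{r×r}, L ∈ ℂ^{1×r} with S = s_0·I_r + N for a single scalar s_0 ∈ ℂ that is not an eigenvalue of the pencil (A, E) (i.e., A − s_0 E is invertible) and N the nilpotent Jordan shift (N_{i,i+1} = 1, else 0), and L = e_1ᵀ = [1, 0, …, 0]. If V ∈ ℂ^{n×r} satisfies A·V − E·V·S = B·L, then the columns v_1, …, v_r of V satisfy v_1 = (A − s_0 E)^{−1}B and v_{k+1} = (A − s_0 E)^{−1}·E·v_k for k = 1, …, r−1; in particular the column span of V equals the Krylov subspace K_r((A − s_0 E)^{−1}E, (A − s_0 E)^{−1}B) whenever V has full column rank. -/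

import Mathlib

/-!
Writing `S = s₀ I + N`, the Sylvester equation becomes `(A - s₀E) V - E V N = B e₁ᵀ`. Right
multiplication by the Jordan shift `N` moves every column one place to the right (the first
column of `V N` is zero), so column by column the equation reads `(A - s₀E) v₁ = B` and
`(A - s₀E) v_{k+1} = E v_k`. Inverting `A - s₀E` gives the recurrence, and by induction
`v_{k+1} = ((A - s₀E)⁻¹E)^k (A - s₀E)⁻¹B`.
-/

open Matrix

namespace Matrix

variable {α : Type*} {l : Type*}

theorem col_sub [Sub α] {m : Type*} (A B : Matrix l m α) (j : m) :
    (A - B).col j = A.col j - B.col j :=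
  rfl

theorem col_mul [NonUnitalNonAssocSemiring α] {m p : Type*} [Fintype m]
    (M : Matrix l m α) (V : Matrix m p α) (j : p) : (M * V).col j = M *ᵥ V.col j :=
  rfl

def jordanShift (α : Type*) [Zero α] [One α] (r : ℕ) : Matrix (Fin r) (Fin r) α :=
  of fun i j => if (j : ℕ) = i + 1 then 1 else 0

section JordanShift

variable [NonAssocSemiring α] {r : ℕ}

theorem col_mul_jordanShift_zero (X : Matrix l (Fin r) α) (hr : 0 < r) :
    (X * jordanShift α r).col ⟨0, hr⟩ = 0 := by
  ext i
  simp [mul_apply, jordanShift]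

theorem col_mul_jordanShift_succ (X : Matrix l (Fin r) α) {k : ℕ} (h : k + 1 < r) :
    (X * jordanShift α r).col ⟨k + 1, h⟩ = X.col ⟨k, k.lt_of_succ_lt h⟩ := by
  ext i
  simp only [col_apply, mul_apply, jordanShift, of_apply, Nat.add_right_cancel_iff, mul_ite,
    mul_one, mul_zero]
  rw [Finset.sum_eq_single ⟨k, k.lt_of_succ_lt h⟩ (fun j _ hj => if_neg fun hk => hj
    (Fin.ext hk.symm)) (by simp)]
  simp

end JordanShift

section Sylvester

variable [Ring α] {n : Type*} [Fintype n] {r : ℕ} {M E : Matrix n n α} {V : Matrix n (Fin r) α}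
  {b : n → α} (hr : 0 < r)
  (hV : M * V - E * V * jordanShift α r = vecMulVec b (Pi.single ⟨0, hr⟩ 1))
include hV

theorem mulVec_col_zero_of_sylvester_jordanShift : M *ᵥ V.col ⟨0, hr⟩ = b := by
  have h := congrArg (·.col ⟨0, hr⟩) hV
  rw [Matrix.mul_assoc, col_sub, col_mul, col_mul E,
    col_mul_jordanShift_zero, col_vecMulVec] at h
  simpa using h

theorem mulVec_col_succ_of_sylvester_jordanShift {k : ℕ} (h : k + 1 < r) :
    M *ᵥ V.col ⟨k + 1, h⟩ = E *ᵥ V.col ⟨k, k.lt_of_succ_lt h⟩ := by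
  have h := congrArg (·.col ⟨k + 1, h⟩) hV
  rw [Matrix.mul_assoc, col_sub, col_mul, col_mul E,
    col_mul_jordanShift_succ, col_vecMulVec] at h
  simpa [sub_eq_zero] using h

end Sylvester

theorem eq_pow_mulVec_of_succ_eq_mulVec [Semiring α] {n : Type*} [Fintype n] [DecidableEq n]
    {r : ℕ} {A : Matrix n n α} {x : n → α} {v : Fin r → n → α} (hr : 0 < r)
    (h0 : v ⟨0, hr⟩ = x)
    (hsucc : ∀ k (h : k + 1 < r), v ⟨k + 1, h⟩ = A *ᵥ v ⟨k, k.lt_of_succ_lt h⟩) :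
    ∀ k : Fin r, v k = (A ^ (k : ℕ)) *ᵥ x := by
  rintro ⟨k, hk⟩
  induction k with
  | zero => simpa using h0
  | succ k ih => rw [hsucc k hk, ih, mulVec_mulVec, ← pow_succ']

end Matrix

theorem single_point_sylvester_krylov_general {n r : ℕ} (hr : 0 < r)
    (s₀ : ℂ)
    (Ac Ec : Matrix (Fin n) (Fin n) ℂ) (Bc : Fin n → ℂ)
    (hinv : IsUnit (Ac - s₀ • Ec))
    (S : Matrix (Fin r) (Fin r) ℂ)
    (hS : ∀ i j : Fin r, S i j =
      (if i = j then s₀ else 0) + (if (j : ℕ) = (i : ℕ) + 1 then 1 else 0))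
    (L : Matrix (Fin 1) (Fin r) ℂ)
    (hL : ∀ j : Fin r, L 0 j = if j = ⟨0, hr⟩ then 1 else 0)
    (V : Matrix (Fin n) (Fin r) ℂ)
    (hV : Ac * V - Ec * V * S = (Matrix.of fun i (_ : Fin 1) => Bc i) * L) :
    ((fun i => V i ⟨0, hr⟩) = ((Ac - s₀ • Ec)⁻¹).mulVec Bc) ∧
    (∀ k : ℕ, ∀ h : k + 1 < r,
      (fun i => V i ⟨k + 1, h⟩) =
        ((Ac - s₀ • Ec)⁻¹ * Ec).mulVec (fun i => V i ⟨k, Nat.lt_of_succ_lt h⟩)) ∧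
    (V.rank = r →
      Submodule.span ℂ (Set.range fun j : Fin r => fun i => V i j) =
        Submodule.span ℂ (Set.range fun k : Fin r =>
          (((Ac - s₀ • Ec)⁻¹ * Ec) ^ (k : ℕ)).mulVec
            (((Ac - s₀ • Ec)⁻¹).mulVec Bc))) := by
  have := hinv.invertible
  have hS' : S = s₀ • 1 + jordanShift ℂ r := by
    ext i j
    simp [hS, jordanShift, one_apply]
  have hBL : (of fun i (_ : Fin 1) => Bc i) * L = vecMulVec Bc (Pi.single ⟨0, hr⟩ 1) := by
    ext i j
    simp [mul_apply, vecMulVec_apply, hL, Pi.single_apply]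
  have hV' : (Ac - s₀ • Ec) * V - Ec * V * jordanShift ℂ r =
      vecMulVec Bc (Pi.single ⟨0, hr⟩ 1) := by
    rw [← hBL, ← hV, hS', Matrix.mul_add, Matrix.sub_mul, Matrix.mul_smul, Matrix.mul_one,
      Matrix.smul_mul]
    abel
  have h0 : V.col ⟨0, hr⟩ = (Ac - s₀ • Ec)⁻¹ *ᵥ Bc :=
    (inv_mulVec_eq_vec (mulVec_col_zero_of_sylvester_jordanShift hr hV').symm).symm
  have hsucc : ∀ k (h : k + 1 < r),
      V.col ⟨k + 1, h⟩ = ((Ac - s₀ • Ec)⁻¹ * Ec) *ᵥ V.col ⟨k, k.lt_of_succ_lt h⟩ := by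
    intro k h
    rw [← mulVec_mulVec, ← mulVec_col_succ_of_sylvester_jordanShift hr hV' h,
      inv_mulVec_eq_vec rfl]
  exact ⟨h0, hsucc, fun _ => congrArg (fun v => Submodule.span ℂ (Set.range v))
    (funext (eq_pow_mulVec_of_succ_eq_mulVec hr h0 hsucc))⟩

/-- Single expansion point duality (one direction): if `S = s₀ I + N` with `N` the
Jordan shift, `L = e₁ᵀ`, `A - s₀E` invertible, and `A V - E V S = B L`, then the
columns of `V` are the rational Krylov vectors `v₁ = (A - s₀E)⁻¹B`,
`v_{k+1} = (A - s₀E)⁻¹ E v_k`; in particular if `V` has full column rank its column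
span is the Krylov subspace `K_r((A - s₀E)⁻¹E, (A - s₀E)⁻¹B)`. -/
theorem single_point_sylvester_krylov {n r : ℕ} (hr : 0 < r)
    (A E : Matrix (Fin n) (Fin n) ℝ) (B : Matrix (Fin n) (Fin 1) ℝ)
    (s₀ : ℂ)
    (Ac Ec : Matrix (Fin n) (Fin n) ℂ) (Bc : Fin n → ℂ)
    (hAc : Ac = A.map Complex.ofReal) (hEc : Ec = E.map Complex.ofReal)
    (hBc : Bc = fun i => (B i 0 : ℂ))
    (hinv : IsUnit (Ac - s₀ • Ec))
    (S : Matrix (Fin r) (Fin r) ℂ)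
    (hS : ∀ i j : Fin r, S i j =
      (if i = j then s₀ else 0) + (if (j : ℕ) = (i : ℕ) + 1 then 1 else 0))
    (L : Matrix (Fin 1) (Fin r) ℂ)
    (hL : ∀ j : Fin r, L 0 j = if j = ⟨0, hr⟩ then 1 else 0)
    (V : Matrix (Fin n) (Fin r) ℂ)
    (hV : Ac * V - Ec * V * S = (Matrix.of fun i (_ : Fin 1) => Bc i) * L) :
    ((fun i => V i ⟨0, hr⟩) = ((Ac - s₀ • Ec)⁻¹).mulVec Bc) ∧
    (∀ k : ℕ, ∀ h : k + 1 < r,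
      (fun i => V i ⟨k + 1, h⟩) =
        ((Ac - s₀ • Ec)⁻¹ * Ec).mulVec (fun i => V i ⟨k, Nat.lt_of_succ_lt h⟩)) ∧
    (V.rank = r →
      Submodule.span ℂ (Set.range fun j : Fin r => fun i => V i j) =
        Submodule.span ℂ (Set.range fun k : Fin r =>
          (((Ac - s₀ • Ec)⁻¹ * Ec) ^ (k : ℕ)).mulVec
            (((Ac - s₀ • Ec)⁻¹).mulVec Bc))) :=
  single_point_sylvester_krylov_general hr s₀ Ac Ec Bc hinv S hS L hL V hV
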